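/- arXiv:1711.04466 — 2 statements merged into one kernel-verified Lean document; each statement's English description precedes it below -/
import Mathlib

section
/- Let Y be a discrete random variable, S a finite set of discrete random variables with Y ∉ S, with joint distribution P, and assume Y has multiple Markov boundaries within S under P; fix one of them, M₀. Then for every δ > 0 there exists a joint distribution P' of (S, Y) on the same finite value sets with total variation distance d(P, P') < δ such that under P', M₀ is the unique Markov boundary of Y within S. -/
open scoped BigOperators

noncomputable section

/-- `p` is a probability mass function on the finite type `Ω`. -/
def IsDist {Ω : Type*} [Fintype Ω] (p : Ω → ℝ) : Prop :=
  (∀ w, 0 ≤ p w) ∧ ∑ w, p w = 1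

/-- Total variation distance between two distributions on the same finite type. -/
def tvDist {Ω : Type*} [Fintype Ω] (p q : Ω → ℝ) : ℝ :=
  (∑ w, |p w - q w|) / 2

variable {ι : Type*} [Fintype ι] [DecidableEq ι]
variable {α : ι → Type*} [∀ i, Fintype (α i)] [∀ i, DecidableEq (α i)]

/-- Marginal probability, under joint pmf `p`, of the event that the variables in the
collection `A` take the values prescribed by the configuration `x`. -/
def margProb (p : (∀ i, α i) → ℝ) (A : Finset ι) (x : ∀ i, α i) : ℝ :=
  ∑ w : ∀ i, α i, if ∀ i ∈ A, w i = x i then p w else 0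

/-- Conditional independence of the collections `A` and `B` given the collection `C`:
`f(a, b | c) = f(a | c) f(b | c)` whenever `f(c) > 0` (stated in multiplied-out form). -/
def CondIndep (p : (∀ i, α i) → ℝ) (A B C : Finset ι) : Prop :=
  ∀ x : ∀ i, α i, 0 < margProb p C x →
    margProb p (A ∪ B ∪ C) x * margProb p C x =
      margProb p (A ∪ C) x * margProb p (B ∪ C) x

/-- `M` is a Markov blanket of the variable `y` within the collection `T`. -/
def MarkovBlanket (p : (∀ i, α i) → ℝ) (y : ι) (T M : Finset ι) : Prop :=
  M ⊆ T ∧ CondIndep p {y} (T \ M) M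

/-- `M` is a Markov boundary of `y` within `T`: a Markov blanket no proper subset of
which is a Markov blanket. -/
def MarkovBoundary (p : (∀ i, α i) → ℝ) (y : ι) (T M : Finset ι) : Prop :=
  MarkovBlanket p y T M ∧ ∀ M' ⊂ M, ¬ MarkovBlanket p y T M'

/-- Mutual information between the collections `A` and `B`
(with the convention `0 · log(junk) = 0` on zero-probability terms). -/
def MI (p : (∀ i, α i) → ℝ) (A B : Finset ι) : ℝ :=
  ∑ w : ∀ i, α i, p w *
    Real.log (margProb p (A ∪ B) w / (margProb p A w * margProb p B w))

/-- Conditional mutual information between collections `A` and `B` given `C`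
(with the convention `0 · log(junk) = 0` on zero-probability terms). -/
def CMI (p : (∀ i, α i) → ℝ) (A B C : Finset ι) : ℝ :=
  ∑ w : (∀ i, α i), p w *
    Real.log ((margProb p (A ∪ B ∪ C) w * margProb p C w) /
      (margProb p (A ∪ C) w * margProb p (B ∪ C) w))


variable [∀ i, Nonempty (α i)]

/-!
Let `κ` be the conditional pmf of `y` given `M₀` under `p`. As `M₀` is a blanket, `κ` is also
the conditional pmf of `y` given all of `S`. Mixing `p` with weight `ε` of the distribution in
which `y` is drawn from `κ` and every other variable is uniform keeps `κ` as the conditional pmf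
of `y` given `S` and given `M₀`, moves `p` by at most `ε` in total variation, and gives every
configuration of `S` positive probability. Under such a distribution a blanket `M ⊆ S` forces
`κ` to depend on `y` and `M` only, while `κ` depends on every variable of `M₀`: otherwise
removing that variable from `M₀` would leave a blanket of `p`, against minimality. So `M₀` is
the least blanket, hence the unique boundary.
-/

theorem IsDist.mix {Ω : Type*} [Fintype Ω] {p r : Ω → ℝ} (hp : IsDist p) (hr : IsDist r)
    {ε : ℝ} (hε0 : 0 ≤ ε) (hε1 : ε ≤ 1) : IsDist (fun w => (1 - ε) * p w + ε * r w) := by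
  refine ⟨fun w => add_nonneg (mul_nonneg (sub_nonneg.2 hε1) (hp.1 w))
    (mul_nonneg hε0 (hr.1 w)), ?_⟩
  rw [Finset.sum_add_distrib, ← Finset.mul_sum, ← Finset.mul_sum, hp.2, hr.2]
  ring

theorem tvDist_mix_le {Ω : Type*} [Fintype Ω] {p r : Ω → ℝ} (hp : IsDist p) (hr : IsDist r)
    {ε : ℝ} (hε0 : 0 ≤ ε) : tvDist p (fun w => (1 - ε) * p w + ε * r w) ≤ ε := by
  have hpt : ∀ w, |p w - ((1 - ε) * p w + ε * r w)| ≤ ε * (p w + r w) := fun w => by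
    rw [show p w - ((1 - ε) * p w + ε * r w) = ε * (p w - r w) by ring, abs_mul,
      abs_of_nonneg hε0]
    exact mul_le_mul_of_nonneg_left
      (abs_sub_le_iff.2 ⟨by linarith [hr.1 w], by linarith [hp.1 w]⟩) hε0
  calc tvDist p _ ≤ (∑ w, ε * (p w + r w)) / 2 := by
        unfold tvDist; gcongr with w; exact hpt w
    _ = ε := by rw [← Finset.mul_sum, Finset.sum_add_distrib, hp.2, hr.2]; ring

section

omit [∀ i, Nonempty (α i)]

theorem margProb_add (f g : (∀ i, α i) → ℝ) (A : Finset ι) (x : ∀ i, α i) :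
    margProb (fun w => f w + g w) A x = margProb f A x + margProb g A x := by
  simp only [margProb, ← Finset.sum_add_distrib]
  exact Finset.sum_congr rfl fun w _ => by split_ifs <;> simp

theorem margProb_const_mul (c : ℝ) (f : (∀ i, α i) → ℝ) (A : Finset ι) (x : ∀ i, α i) :
    margProb (fun w => c * f w) A x = c * margProb f A x := by
  simp only [margProb, Finset.mul_sum, mul_ite, mul_zero]

theorem margProb_empty (f : (∀ i, α i) → ℝ) (x : ∀ i, α i) :
    margProb f ∅ x = ∑ w, f w := by
  simp [margProb]

theorem margProb_nonneg {f : (∀ i, α i) → ℝ} (hf : ∀ w, 0 ≤ f w) (A : Finset ι)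
    (x : ∀ i, α i) : 0 ≤ margProb f A x :=
  Finset.sum_nonneg fun w _ => by split_ifs <;> simp [hf w]

theorem le_margProb {f : (∀ i, α i) → ℝ} (hf : ∀ w, 0 ≤ f w) (A : Finset ι)
    (x : ∀ i, α i) : f x ≤ margProb f A x := by
  simpa [margProb] using
    Finset.single_le_sum (f := fun w => if ∀ i ∈ A, w i = x i then f w else 0)
      (fun w _ => by split_ifs <;> simp [hf w]) (Finset.mem_univ x)

theorem margProb_anti {f : (∀ i, α i) → ℝ} (hf : ∀ w, 0 ≤ f w) {A B : Finset ι}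
    (hAB : A ⊆ B) (x : ∀ i, α i) : margProb f B x ≤ margProb f A x :=
  Finset.sum_le_sum fun w _ => by
    by_cases h : ∀ i ∈ B, w i = x i
    · rw [if_pos h, if_pos fun i hi => h i (hAB hi)]
    · rw [if_neg h]; split_ifs <;> simp [hf w]

theorem dependsOn_margProb (f : (∀ i, α i) → ℝ) (A : Finset ι) :
    DependsOn (margProb f A) A := fun _ _ h =>
  Finset.sum_congr rfl fun _ _ => if_congr
    ⟨fun hw i hi => (hw i hi).trans (h i hi), fun hw i hi => (hw i hi).trans (h i hi).symm⟩
    rfl rfl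

theorem margProb_eq_mul_of_dependsOn {q : (∀ i, α i) → ℝ} {A : Finset ι} (hq : DependsOn q A)
    (x : ∀ i, α i) : margProb q A x = q x * margProb (fun _ => 1) A x := by
  simp only [margProb, Finset.mul_sum, mul_ite, mul_one, mul_zero]
  refine Finset.sum_congr rfl fun w _ => ?_
  split_ifs with h
  · exact hq h
  · rfl

theorem margProb_const_eq (c : ℝ) (A : Finset ι) (x x' : ∀ i, α i) :
    margProb (fun _ => c) A x = margProb (fun _ => c) A x' := by
  refine Fintype.sum_equiv (Equiv.piCongrRight fun i => Equiv.swap (x i) (x' i)) _ _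
    fun w => ?_
  simp [Equiv.swap_apply_eq_iff]

theorem sum_margProb_insert_update {j : ι} {A : Finset ι} (hjA : j ∉ A)
    (f : (∀ i, α i) → ℝ) (x : ∀ i, α i) :
    ∑ v : α j, margProb f (insert j A) (Function.update x j v) = margProb f A x := by
  simp only [margProb]
  rw [Finset.sum_comm]
  refine Finset.sum_congr rfl fun w _ => ?_
  have hcond : ∀ v : α j, (∀ i ∈ insert j A, w i = Function.update x j v i) ↔
      (w j = v ∧ ∀ i ∈ A, w i = x i) := fun v => by
    rw [Finset.forall_mem_insert, Function.update_self]
    refine and_congr Iff.rfl (forall₂_congr fun i hi => ?_)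
    rw [Function.update_of_ne (ne_of_mem_of_not_mem hi hjA)]
  simp only [hcond, ite_and]
  simp

theorem margProb_eq_zero_of_subset {f : (∀ i, α i) → ℝ} (hf : ∀ w, 0 ≤ f w)
    {A B : Finset ι} (hAB : A ⊆ B) {x : ∀ i, α i} (h : margProb f A x = 0) :
    margProb f B x = 0 :=
  le_antisymm (h ▸ margProb_anti hf hAB x) (margProb_nonneg hf B x)

def HasCondProb (f : (∀ i, α i) → ℝ) (y : ι) (A : Finset ι) (q : (∀ i, α i) → ℝ) : Prop :=
  ∀ x, margProb f (insert y A) x = q x * margProb f A x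

def IsCondKernel (y : ι) (A : Finset ι) (q : (∀ i, α i) → ℝ) : Prop :=
  (∀ w, 0 ≤ q w) ∧ DependsOn q ↑(insert y A) ∧ ∀ x, ∑ v : α y, q (Function.update x y v) = 1

/-- Where the conditioning event is null the kernel is uniform in `y`, so that it is a pmf in
`y` for every configuration of `A`. -/
def condKernel (f : (∀ i, α i) → ℝ) (y : ι) (A : Finset ι) (w : ∀ i, α i) : ℝ :=
  if margProb f A w = 0 then (Fintype.card (α y) : ℝ)⁻¹
  else margProb f (insert y A) w / margProb f A w

section CondProb

variable {f g q : (∀ i, α i) → ℝ} {y : ι} {A : Finset ι}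

theorem HasCondProb.const_mul (c : ℝ) (hf : HasCondProb f y A q) :
    HasCondProb (fun w => c * f w) y A q := fun x => by
  rw [margProb_const_mul, margProb_const_mul, hf, mul_left_comm]

theorem HasCondProb.mix (hf : HasCondProb f y A q) (hg : HasCondProb g y A q) (ε : ℝ) :
    HasCondProb (fun w => (1 - ε) * f w + ε * g w) y A q := fun x => by
  simp only [margProb_add, margProb_const_mul, hf x, hg x]
  ring

theorem hasCondProb_condKernel (hf : ∀ w, 0 ≤ f w) (y : ι) (A : Finset ι) :
    HasCondProb f y A (condKernel f y A) := fun x => by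
  unfold condKernel
  split_ifs with h
  · rw [h, mul_zero, margProb_eq_zero_of_subset hf (Finset.subset_insert y A) h]
  · rw [div_mul_cancel₀ _ h]

theorem dependsOn_condKernel (f : (∀ i, α i) → ℝ) (y : ι) (A : Finset ι) :
    DependsOn (condKernel f y A) ↑(insert y A) := fun x x' h => by
  have hA : ∀ i ∈ A, x i = x' i := fun i hi => h i (Finset.mem_insert_of_mem hi)
  simp only [condKernel, dependsOn_margProb f A hA, dependsOn_margProb f (insert y A) h]

theorem isCondKernel_condKernel (hf : ∀ w, 0 ≤ f w) (hyA : y ∉ A) :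
    IsCondKernel y A (condKernel f y A) := by
  refine ⟨fun w => ?_, dependsOn_condKernel f y A, fun x => ?_⟩
  · unfold condKernel
    split_ifs
    · positivity
    · exact div_nonneg (margProb_nonneg hf _ _) (margProb_nonneg hf _ _)
  · have hA : ∀ v, margProb f A (Function.update x y v) = margProb f A x := fun v =>
      dependsOn_margProb f A fun i hi =>
        Function.update_of_ne (ne_of_mem_of_not_mem hi hyA) v x
    simp only [condKernel, hA]
    split_ifs with h
    · have : Nonempty (α y) := ⟨x y⟩
      simp [Fintype.card_ne_zero]
    · rw [← Finset.sum_div, sum_margProb_insert_update hyA, div_self h]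

omit [Fintype ι] [∀ i, DecidableEq (α i)] in
theorem IsCondKernel.mono {B : Finset ι} (hq : IsCondKernel y A q) (hAB : A ⊆ B) :
    IsCondKernel y B q :=
  ⟨hq.1, hq.2.1.mono (Finset.coe_subset.2 (Finset.insert_subset_insert y hAB)), hq.2.2⟩

theorem IsCondKernel.margProb_eq (hq : IsCondKernel y A q) (hyA : y ∉ A) (x : ∀ i, α i) :
    margProb q A x = margProb (fun _ => 1) (insert y A) x := by
  rw [← sum_margProb_insert_update hyA]
  simp only [margProb_eq_mul_of_dependsOn hq.2.1, margProb_const_eq 1 (insert y A) _ x,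
    ← Finset.sum_mul, hq.2.2, one_mul]

theorem IsCondKernel.hasCondProb_self (hq : IsCondKernel y A q) (hyA : y ∉ A) :
    HasCondProb q y A q := fun x => by
  rw [margProb_eq_mul_of_dependsOn hq.2.1, hq.margProb_eq hyA]

theorem HasCondProb.of_insert {i : ι} (h : HasCondProb f y (insert i A) q)
    (hq : ∀ x (v : α i), q (Function.update x i v) = q x) (hiA : i ∉ A) (hiy : i ≠ y) :
    HasCondProb f y A q := fun x => by
  have hi : i ∉ insert y A := by simp [hiA, hiy]
  rw [← sum_margProb_insert_update hi, ← sum_margProb_insert_update hiA, Finset.mul_sum]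
  refine Finset.sum_congr rfl fun v _ => ?_
  rw [Finset.insert_comm, h, hq]

end CondProb

section MarkovBlanket

variable {f q : (∀ i, α i) → ℝ} {y : ι} {S M : Finset ι}

theorem markovBlanket_iff_hasCondProb (hf : ∀ w, 0 ≤ f w) (hMS : M ⊆ S)
    (hM : HasCondProb f y M q) : MarkovBlanket f y S M ↔ HasCondProb f y S q := by
  have hunion : ({y} ∪ (S \ M) ∪ M : Finset ι) = insert y S := by
    rw [Finset.union_assoc, Finset.sdiff_union_of_subset hMS, Finset.insert_eq]
  simp only [MarkovBlanket, CondIndep, hMS, true_and]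
  rw [hunion, Finset.sdiff_union_of_subset hMS, ← Finset.insert_eq]
  refine ⟨fun h x => ?_, fun h x _ => by rw [h x, hM x]; ring⟩
  by_cases hx : margProb f M x = 0
  · rw [margProb_eq_zero_of_subset hf (hMS.trans (Finset.subset_insert y S)) hx,
      margProb_eq_zero_of_subset hf hMS hx, mul_zero]
  · have hxpos : 0 < margProb f M x := (margProb_nonneg hf M x).lt_of_ne' hx
    refine mul_right_cancel₀ hx ?_
    rw [h x hxpos, hM x]
    ring

theorem HasCondProb.dependsOn_of_markovBlanket (hf : ∀ w, 0 ≤ f w)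
    (hpos : ∀ x, 0 < margProb f S x) (hq : HasCondProb f y S q) (hM : MarkovBlanket f y S M) :
    DependsOn q ↑(insert y M) := by
  have hκ := (markovBlanket_iff_hasCondProb hf hM.1 (hasCondProb_condKernel hf y M)).1 hM
  have heq : q = condKernel f y M :=
    funext fun x => mul_right_cancel₀ (hpos x).ne' ((hq x).symm.trans (hκ x))
  exact heq ▸ dependsOn_condKernel f y M

end MarkovBlanket

section Boundary

variable {f q : (∀ i, α i) → ℝ} {y : ι} {S M₀ : Finset ι}

/-- If the kernel did not depend on `i`, dropping `i` from `M₀` would leave a blanket. -/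
theorem MarkovBoundary.exists_condKernel_update_ne (hf : ∀ w, 0 ≤ f w) (hyS : y ∉ S)
    (hM₀ : MarkovBoundary f y S M₀) {i : ι} (hi : i ∈ M₀) :
    ∃ x, ∃ v : α i, condKernel f y M₀ (Function.update x i v) ≠ condKernel f y M₀ x := by
  by_contra! hconst
  have hM₀S : M₀ ⊆ S := hM₀.1.1
  have hκ := hasCondProb_condKernel hf y M₀
  have hS := (markovBlanket_iff_hasCondProb hf hM₀S hκ).1 hM₀.1
  have hκ' : HasCondProb f y (insert i (M₀.erase i)) (condKernel f y M₀) := by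
    rwa [Finset.insert_erase hi]
  have hErase := hκ'.of_insert hconst (Finset.notMem_erase i M₀)
    (ne_of_mem_of_not_mem (hM₀S hi) hyS)
  exact hM₀.2 _ (Finset.erase_ssubset hi)
    ((markovBlanket_iff_hasCondProb hf ((Finset.erase_subset i M₀).trans hM₀S) hErase).2 hS)

theorem HasCondProb.subset_of_markovBlanket (hf : ∀ w, 0 ≤ f w)
    (hpos : ∀ x, 0 < margProb f S x) (hq : HasCondProb f y S q) (hyM₀ : y ∉ M₀)
    (hdep : ∀ i ∈ M₀, ∃ x, ∃ v : α i, q (Function.update x i v) ≠ q x) {M : Finset ι}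
    (hM : MarkovBlanket f y S M) : M₀ ⊆ M := by
  intro i hi
  by_contra hiM
  obtain ⟨x, v, hne⟩ := hdep i hi
  have hiyM : i ∉ insert y M := by simp [hiM, ne_of_mem_of_not_mem hi hyM₀]
  exact hne (hq.dependsOn_of_markovBlanket hf hpos hM fun j hj =>
    Function.update_of_ne (ne_of_mem_of_not_mem hj hiyM) v x)

theorem MarkovBlanket.markovBoundary_unique (h₀ : MarkovBlanket f y S M₀)
    (hleast : ∀ M, MarkovBlanket f y S M → M₀ ⊆ M) :
    MarkovBoundary f y S M₀ ∧ ∀ M, MarkovBoundary f y S M → M = M₀ :=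
  ⟨⟨h₀, fun M hM hbl => hM.2 (hleast M hbl)⟩,
    fun M hM => by_contra fun hne => hM.2 M₀ ((hleast M hM.1).ssubset_of_ne (Ne.symm hne)) h₀⟩

end Boundary

end

theorem IsCondKernel.exists_isDist {q : (∀ i, α i) → ℝ} {y : ι} {S M : Finset ι}
    (hq : IsCondKernel y M q) (hMS : M ⊆ S) (hyS : y ∉ S) :
    ∃ r, IsDist r ∧ HasCondProb r y S q ∧ HasCondProb r y M q ∧ ∀ x, 0 < margProb r S x := by
  have hqS := hq.mono hMS
  have hmarg : ∀ x, 0 < margProb q S x := fun x => by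
    rw [hqS.margProb_eq hyS]
    exact one_pos.trans_le (le_margProb (fun _ => zero_le_one) _ x)
  set Z := ∑ w, q w
  have hZ : 0 < Z := by
    let x : ∀ i, α i := Classical.arbitrary _
    calc 0 < margProb q S x := hmarg x
      _ ≤ margProb q ∅ x := margProb_anti hq.1 (Finset.empty_subset S) x
      _ = Z := margProb_empty q x
  refine ⟨fun w => Z⁻¹ * q w, ⟨fun w => mul_nonneg (inv_nonneg.2 hZ.le) (hq.1 w), ?_⟩,
    (hqS.hasCondProb_self hyS).const_mul _,
    (hq.hasCondProb_self fun h => hyS (hMS h)).const_mul _, fun x => ?_⟩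
  · rw [← Finset.mul_sum, inv_mul_cancel₀ hZ.ne']
  · rw [margProb_const_mul]
    exact mul_pos (inv_pos.2 hZ) (hmarg x)

theorem perturbation_to_unique_markov_boundary_general
    (p : (∀ i, α i) → ℝ) (hp : IsDist p)
    (y : ι) (S : Finset ι) (hyS : y ∉ S)
    (M₀ : Finset ι) (hM₀ : MarkovBoundary p y S M₀) :
    ∀ δ : ℝ, 0 < δ → ∃ p' : (∀ i, α i) → ℝ, IsDist p' ∧ tvDist p p' < δ ∧
      MarkovBoundary p' y S M₀ ∧ ∀ M, MarkovBoundary p' y S M → M = M₀ := by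
  intro δ hδ
  have hM₀S : M₀ ⊆ S := hM₀.1.1
  have hyM₀ : y ∉ M₀ := fun h => hyS (hM₀S h)
  have hpM₀ := hasCondProb_condKernel hp.1 y M₀
  have hpS := (markovBlanket_iff_hasCondProb hp.1 hM₀S hpM₀).1 hM₀.1
  obtain ⟨r, hr, hrS, hrM₀, hrpos⟩ :=
    (isCondKernel_condKernel hp.1 hyM₀).exists_isDist hM₀S hyS
  set ε := min 1 (δ / 2)
  have hε0 : 0 < ε := lt_min one_pos (half_pos hδ)
  have hε1 : ε ≤ 1 := min_le_left _ _
  set p' := fun w => (1 - ε) * p w + ε * r w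
  have hp' : IsDist p' := hp.mix hr hε0.le hε1
  have hp'S := hpS.mix hrS ε
  have hpos : ∀ x, 0 < margProb p' S x := fun x => by
    rw [margProb_add, margProb_const_mul, margProb_const_mul]
    exact add_pos_of_nonneg_of_pos
      (mul_nonneg (sub_nonneg.2 hε1) (margProb_nonneg hp.1 S x)) (mul_pos hε0 (hrpos x))
  refine ⟨p', hp', (tvDist_mix_le hp hr hε0.le).trans_lt
    ((min_le_right _ _).trans_lt (half_lt_self hδ)), ?_⟩
  refine ((markovBlanket_iff_hasCondProb hp'.1 hM₀S (hpM₀.mix hrM₀ ε)).2 hp'S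
    ).markovBoundary_unique fun M hM => hp'S.subset_of_markovBlanket hp'.1 hpos hyM₀ ?_ hM
  exact fun i hi => hM₀.exists_condKernel_update_ne hp.1 hyS hi

/-- if `Y` has multiple Markov boundaries within `S` under `P` and `M₀`
is one of them, then arbitrarily close to `P` in total variation there is a distribution
`P'` under which `M₀` is the unique Markov boundary of `Y` within `S`. -/
theorem perturbation_to_unique_markov_boundary
    (p : (∀ i, α i) → ℝ) (hp : IsDist p)
    (y : ι) (S : Finset ι) (hyS : y ∉ S)
    (hmulti : ∃ M₁ M₂, MarkovBoundary p y S M₁ ∧ MarkovBoundary p y S M₂ ∧ M₁ ≠ M₂)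
    (M₀ : Finset ι) (hM₀ : MarkovBoundary p y S M₀) :
    ∀ δ : ℝ, 0 < δ → ∃ p' : (∀ i, α i) → ℝ, IsDist p' ∧ tvDist p p' < δ ∧
      MarkovBoundary p' y S M₀ ∧ ∀ M, MarkovBoundary p' y S M → M = M₀ :=
  perturbation_to_unique_markov_boundary_general p hp y S hyS M₀ hM₀

end
end

section
/- Let Y be a discrete random variable and S a finite set of discrete random variables with Y ∉ S. If W ∈ S is essential for Y (i.e., Y is not conditionally independent of W given S \ {W}), then W belongs to every Markov boundary of Y within S. -/
/-!
If a Markov boundary `M` of `Y` within `S` missed `W`, then `M ⊆ S \ {W}`, and the weak union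
property of conditional independence would turn `Y ⊥ S \ M | M` into `Y ⊥ {W} | S \ {W}`,
contradicting essentiality. Weak union rests on decomposition, `Y ⊥ B | C ⇒ Y ⊥ Z | C` for
`Z ⊆ B`, which comes from summing the defining identity over the variables outside
`Y, Z, C`; with both identities at hand, conditioning on `Z` as well is a matter of algebra.
-/

open scoped BigOperators

noncomputable section

variable {ι : Type*} [Fintype ι] [DecidableEq ι]
variable {α : ι → Type*} [∀ i, Fintype (α i)] [∀ i, DecidableEq (α i)]

lemma margProb_congr (p : (∀ i, α i) → ℝ) (A : Finset ι) {x x' : ∀ i, α i}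
    (h : ∀ i ∈ A, x i = x' i) : margProb p A x = margProb p A x' := by
  unfold margProb
  refine Finset.sum_congr rfl fun w _ => if_congr ?_ rfl rfl
  exact forall₂_congr fun i hi => by rw [h i hi]

lemma margProb_le_of_subset {p : (∀ i, α i) → ℝ} (hp0 : ∀ w, 0 ≤ p w) {A B : Finset ι}
    (h : B ⊆ A) (x : ∀ i, α i) : margProb p A x ≤ margProb p B x := by
  unfold margProb
  refine Finset.sum_le_sum fun w _ => ?_
  split_ifs with hA hB
  · exact le_rfl
  · exact absurd (fun i hi => hA i (h hi)) hB
  · exact hp0 w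
  · exact le_rfl

lemma card_filter_agreeOn (E G : Finset ι) (x w : ∀ i, α i) :
    ((Finset.univ.filter fun v : ∀ i, α i => (∀ i ∈ E, v i = x i) ∧ ∀ i ∈ G, w i = v i).card
      : ℝ) = if ∀ i ∈ E ∩ G, w i = x i then ∏ i ∈ (E ∪ G)ᶜ, (Fintype.card (α i) : ℝ) else 0 := by
  have hpi : (Finset.univ.filter fun v : ∀ i, α i => (∀ i ∈ E, v i = x i) ∧ ∀ i ∈ G, w i = v i)
      = Fintype.piFinset fun i =>
          Finset.univ.filter fun a => (i ∈ E → a = x i) ∧ (i ∈ G → a = w i) := by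
    ext v
    simp only [Finset.mem_filter, Finset.mem_univ, true_and, Fintype.mem_piFinset]
    exact ⟨fun h i => ⟨h.1 i, fun hi => (h.2 i hi).symm⟩,
      fun h => ⟨fun i => (h i).1, fun i hi => ((h i).2 hi).symm⟩⟩
  rw [hpi, Fintype.card_piFinset, Nat.cast_prod]
  split_ifs with hxw
  · rw [← Finset.prod_mul_prod_compl (E ∪ G), Finset.prod_eq_one, one_mul]
    · refine Finset.prod_congr rfl fun i hi => ?_
      rw [Finset.mem_compl, Finset.mem_union, not_or] at hi
      simp [hi.1, hi.2]
    · intro i hi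
      by_cases hiE : i ∈ E
      · by_cases hiG : i ∈ G
        · simp [hiE, hiG, hxw i (Finset.mem_inter.2 ⟨hiE, hiG⟩), Finset.filter_eq']
        · simp [hiE, hiG, Finset.filter_eq']
      · simp [hiE, (Finset.mem_union.1 hi).resolve_left hiE, Finset.filter_eq']
  · push Not at hxw
    obtain ⟨i, hi, hne⟩ := hxw
    rw [Finset.mem_inter] at hi
    refine Finset.prod_eq_zero (Finset.mem_univ i) ?_
    simp [hi.1, hi.2, Finset.filter_eq_empty_iff, hne.symm]

lemma sum_agreeOn_margProb (p : (∀ i, α i) → ℝ) (E G : Finset ι) (x : ∀ i, α i) :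
    (∑ v : ∀ i, α i, if ∀ i ∈ E, v i = x i then margProb p G v else 0)
      = (∏ i ∈ (E ∪ G)ᶜ, (Fintype.card (α i) : ℝ)) * margProb p (E ∩ G) x := by
  calc (∑ v : ∀ i, α i, if ∀ i ∈ E, v i = x i then margProb p G v else 0)
      = ∑ w : ∀ i, α i, ∑ v : ∀ i, α i,
          if (∀ i ∈ E, v i = x i) ∧ ∀ i ∈ G, w i = v i then p w else 0 := by
        rw [Finset.sum_comm]
        refine Finset.sum_congr rfl fun v _ => ?_
        split_ifs with hv
        · simp only [margProb, eq_true hv, true_and]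
        · simp [hv]
    _ = ∑ w : ∀ i, α i, ((Finset.univ.filter fun v : ∀ i, α i =>
          (∀ i ∈ E, v i = x i) ∧ ∀ i ∈ G, w i = v i).card : ℝ) * p w := by
        simp only [← Finset.sum_filter, Finset.sum_const, nsmul_eq_mul]
    _ = (∏ i ∈ (E ∪ G)ᶜ, (Fintype.card (α i) : ℝ)) * margProb p (E ∩ G) x := by
        simp only [card_filter_agreeOn, margProb, Finset.mul_sum, ite_mul, zero_mul, mul_ite,
          mul_zero]

lemma condIndep_congr_right {p : (∀ i, α i) → ℝ} {A B B' C : Finset ι} (h : B ∪ C = B' ∪ C) :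
    CondIndep p A B C ↔ CondIndep p A B' C := by
  simp only [CondIndep, Finset.union_assoc, h]

lemma CondIndep.of_subset_right {p : (∀ i, α i) → ℝ} {A B C Z : Finset ι}
    (h : CondIndep p A B C) (hAB : Disjoint A B) (hZB : Z ⊆ B) : CondIndep p A Z C := by
  intro x hx
  -- Sum the defining identity over the configurations that agree with `x` on `A ∪ Z ∪ C`.
  set E := A ∪ Z ∪ C
  have hpt : ∀ v : ∀ i, α i,
      (if ∀ i ∈ E, v i = x i then margProb p (A ∪ B ∪ C) v else 0) * margProb p C x
        = margProb p (A ∪ C) x * (if ∀ i ∈ E, v i = x i then margProb p (B ∪ C) v else 0) := by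
    intro v
    split_ifs with hv
    · have hC : margProb p C v = margProb p C x :=
        margProb_congr p C fun i hi => hv i (by simp [E, hi])
      have hAC : margProb p (A ∪ C) v = margProb p (A ∪ C) x :=
        margProb_congr p (A ∪ C) fun i hi => hv i (by grind)
      rw [← hC, ← hAC]
      exact h v (hC ▸ hx)
    · simp
  have hsum := Finset.sum_congr rfl fun v (_ : v ∈ Finset.univ) => hpt v
  rw [← Finset.sum_mul, ← Finset.mul_sum, sum_agreeOn_margProb, sum_agreeOn_margProb] at hsum
  have hE : E ∩ (A ∪ B ∪ C) = E := by grind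
  have hEB : E ∩ (B ∪ C) = Z ∪ C := by grind [Finset.disjoint_left]
  have hEU : E ∪ (B ∪ C) = E ∪ (A ∪ B ∪ C) := by grind
  have hN : (0 : ℝ) < ∏ i ∈ (E ∪ (A ∪ B ∪ C))ᶜ, (Fintype.card (α i) : ℝ) :=
    Finset.prod_pos fun i _ => Nat.cast_pos.2 (Fintype.card_pos_iff.2 ⟨x i⟩)
  rw [hE, hEB, hEU] at hsum
  apply mul_left_cancel₀ hN.ne'
  linear_combination hsum

lemma CondIndep.weak_union {p : (∀ i, α i) → ℝ} (hp0 : ∀ w, 0 ≤ p w) {A B C Z : Finset ι}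
    (h : CondIndep p A B C) (hAB : Disjoint A B) (hZB : Z ⊆ B) : CondIndep p A B (C ∪ Z) := by
  intro x hx
  have hC : 0 < margProb p C x :=
    hx.trans_le (margProb_le_of_subset hp0 Finset.subset_union_left x)
  have hBC := h x hC
  have hZC := h.of_subset_right hAB hZB x hC
  have hABCZ : A ∪ B ∪ (C ∪ Z) = A ∪ B ∪ C := by grind
  have hBCZ : B ∪ (C ∪ Z) = B ∪ C := by grind
  rw [hABCZ, hBCZ, ← Finset.union_assoc, Finset.union_right_comm A C Z]
  rw [Finset.union_comm Z C] at hZC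
  apply mul_left_cancel₀ hC.ne'
  linear_combination margProb p (C ∪ Z) x * hBC - margProb p (B ∪ C) x * hZC

variable [∀ i, Nonempty (α i)]

/-- half of Lemma 5: an essential variable for `Y` belongs to every
Markov boundary of `Y` within `S`. -/
theorem essential_mem_every_markov_boundary
    (p : (∀ i, α i) → ℝ) (hp : IsDist p)
    (y : ι) (S : Finset ι) (hyS : y ∉ S)
    (W : ι) (hWS : W ∈ S)
    (hess : ¬ CondIndep p {y} {W} (S.erase W)) :
    ∀ M, MarkovBoundary p y S M → W ∈ M := by
  rintro M ⟨⟨hMS, hblanket⟩, -⟩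
  by_contra hWM
  have hMW : M ⊆ S.erase W := fun i hi =>
    Finset.mem_erase.2 ⟨ne_of_mem_of_not_mem hi hWM, hMS hi⟩
  have hy : Disjoint {y} (S \ M) :=
    Finset.disjoint_singleton_left.2 fun h => hyS (Finset.sdiff_subset h)
  have hCI := hblanket.weak_union hp.1 hy (Finset.sdiff_subset_sdiff (S.erase_subset W) le_rfl)
  rw [Finset.union_sdiff_of_subset hMW] at hCI
  refine hess ((condIndep_congr_right ?_).1 hCI)
  grind

end
end
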